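/- Let P = softmax(A) and P̃ = softmax(A - E) be row-wise softmaxes. Then entrywise, (I - D)·P̃ ≤ P ≤ (I + 2D)·P̃, where D is the diagonal matrix with D_{ii} = max_{j,j'} |E_{ij} - E_{ij'}|, provided D_{ii} ≤ 1/2 for all i (so that the Taylor-type inequalities 1+x ≤ e^x ≤ 1+2x hold for |x| ≤ D_{ii}). -/
import Mathlib


noncomputable def rowSoftmax {n m : ℕ} (A : Matrix (Fin n) (Fin m) ℝ) :
    Matrix (Fin n) (Fin m) ℝ :=
  fun i j => Real.exp (A i j) / ∑ t, Real.exp (A i t)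

/-- D_{ii} = max over j, j' of |E_{ij} - E_{ij'}|. -/
noncomputable def rowOsc {n m : ℕ} (E : Matrix (Fin n) (Fin m) ℝ) (i : Fin n) : ℝ :=
  ⨆ j, ⨆ j', |E i j - E i j'|

lemma abs_le_rowOsc {n m : ℕ} (E : Matrix (Fin n) (Fin m) ℝ) (i : Fin n)
    (j j' : Fin m) : |E i j - E i j'| ≤ rowOsc E i := by
  have h1 : |E i j - E i j'| ≤ ⨆ j'', |E i j - E i j''| :=
    le_ciSup (f := fun j'' => |E i j - E i j''|)
      (Set.Finite.bddAbove (Set.finite_range _)) j'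
  exact h1.trans (le_ciSup (f := fun j => ⨆ j', |E i j - E i j'|)
    (Set.Finite.bddAbove (Set.finite_range _)) j)

lemma exp_le_one_add_two_mul {x : ℝ} (h0 : 0 ≤ x) (h1 : x ≤ 1/2) :
    Real.exp x ≤ 1 + 2*x := by
  have hx : 0 < 1 - x := by linarith
  have h2 : 1 - x ≤ Real.exp (-x) := by
    have := Real.add_one_le_exp (-x); linarith
  have h3 : Real.exp x ≤ 1/(1-x) := by
    rw [le_div_iff₀ hx]
    calc Real.exp x * (1-x) ≤ Real.exp x * Real.exp (-x) :=
          mul_le_mul_of_nonneg_left h2 (Real.exp_pos x).le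
      _ = 1 := by rw [← Real.exp_add]; simp
  refine h3.trans ?_
  rw [div_le_iff₀ hx]; nlinarith

theorem softmax_perturbation_bound {n m : ℕ}
    (A E : Matrix (Fin n) (Fin m) ℝ)
    (P : Matrix (Fin n) (Fin m) ℝ) (Pt : Matrix (Fin n) (Fin m) ℝ)
    (hP : P = rowSoftmax A) (hPt : Pt = rowSoftmax (A - E))
    (hD : ∀ i, rowOsc E i ≤ 1 / 2) :
    ∀ i j, (1 - rowOsc E i) * Pt i j ≤ P i j ∧
      P i j ≤ (1 + 2 * rowOsc E i) * Pt i j := by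
  subst hP hPt
  intro i j
  set D := rowOsc E i with hDdef
  have habs : ∀ t, |E i j - E i t| ≤ D := fun t => abs_le_rowOsc E i j t
  have hD0 : 0 ≤ D := le_trans (abs_nonneg _) (habs j)
  have hDhalf : D ≤ 1/2 := hD i
  simp only [rowSoftmax, Matrix.sub_apply]
  set S := ∑ t, Real.exp (A i t) with hSdef
  set St := ∑ t, Real.exp (A i t - E i t) with hStdef
  have hS : 0 < S := Finset.sum_pos (fun t _ => Real.exp_pos _) ⟨j, Finset.mem_univ j⟩
  have hSt : 0 < St := Finset.sum_pos (fun t _ => Real.exp_pos _) ⟨j, Finset.mem_univ j⟩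
  have hlow : (1 - D) * S ≤ Real.exp (E i j) * St := by
    rw [hSdef, hStdef, Finset.mul_sum, Finset.mul_sum]
    refine Finset.sum_le_sum fun t _ => ?_
    have h1 : Real.exp (E i j) * Real.exp (A i t - E i t)
        = Real.exp (A i t) * Real.exp (E i j - E i t) := by
      rw [← Real.exp_add, ← Real.exp_add]; ring_nf
    rw [h1]
    have h2 : -(D) ≤ E i j - E i t := neg_le_of_abs_le (habs t)
    have h3 : 1 - D ≤ Real.exp (E i j - E i t) := by
      have := Real.add_one_le_exp (-D)
      have := Real.exp_le_exp.mpr h2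
      linarith
    nlinarith [Real.exp_pos (A i t), Real.exp_pos (E i j - E i t)]
  have hhigh : Real.exp (E i j) * St ≤ (1 + 2*D) * S := by
    rw [hSdef, hStdef, Finset.mul_sum, Finset.mul_sum]
    refine Finset.sum_le_sum fun t _ => ?_
    have h1 : Real.exp (E i j) * Real.exp (A i t - E i t)
        = Real.exp (A i t) * Real.exp (E i j - E i t) := by
      rw [← Real.exp_add, ← Real.exp_add]; ring_nf
    rw [h1]
    have h2 : E i j - E i t ≤ D := le_of_abs_le (habs t)
    have h3 : Real.exp (E i j - E i t) ≤ 1 + 2*D := by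
      calc Real.exp (E i j - E i t) ≤ Real.exp D := Real.exp_le_exp.mpr h2
        _ ≤ 1 + 2*D := exp_le_one_add_two_mul hD0 hDhalf
    nlinarith [Real.exp_pos (A i t)]
  have hkey : Real.exp (A i j - E i j) * Real.exp (E i j) = Real.exp (A i j) := by
    rw [← Real.exp_add]; ring_nf
  have he : (0:ℝ) ≤ Real.exp (A i j - E i j) := (Real.exp_pos _).le
  constructor
  · rw [mul_div_assoc', div_le_div_iff₀ hSt hS]
    nlinarith [hlow, hkey, he]
  · rw [mul_div_assoc', div_le_div_iff₀ hS hSt]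
    nlinarith [hhigh, hkey, he]
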